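/- arXiv:1203.0481 — 4 statements merged into one kernel-verified Lean document; each statement's English description precedes it below -/
import Mathlib

section
/- Let A be an attractor of the IFS F with basin B(A), let x_0 ∈ B(A) and let σ ∈ Σ^∞. Then the chaos game orbit (x_k)_{k≥0} of x_0 driven by σ is a totally bounded subset of X; consequently the sets C_K(x_0,σ) form a decreasing sequence of nonempty compact sets that converges in the Hausdorff metric to the nonempty compact set C_∞(x_0,σ) = ⋂_{K≥1} C_K(x_0,σ). -/
/-!
The orbit point `x_k` belongs to `F^k({x₀})`, and `F^k({x₀}) → A` in the Hausdorff metric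
because `x₀` lies in the basin. Hence the orbit eventually stays in every `ε`-neighbourhood of
the compact set `A`, so it is covered by finitely many orbit points together with an
`ε`-net of `A`: it is totally bounded. In a complete space the tail closures `C_K` are then
compact, nonempty and decreasing, so their intersection is nonempty and compact, and a
decreasing sequence of compact sets eventually lies in any open neighbourhood of its
intersection, which gives Hausdorff convergence.
-/

open Metric Filter Set MeasureTheory

variable {X : Type*} [MetricSpace X] [CompleteSpace X]
variable {Λ : Type*} [Fintype Λ] [Nonempty Λ]

/-- The Hutchinson operator of the IFS given by the maps `f a`, `a : Λ`. -/
def Hutch (f : Λ → X → X) (B : Set X) : Set X := ⋃ a : Λ, f a '' B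

/-- `A` attracts, under iteration of the Hutchinson operator, every nonempty
compact subset of `U`, in the Hausdorff metric. -/
def Attracts (f : Λ → X → X) (A U : Set X) : Prop :=
  ∀ B : Set X, B.Nonempty → IsCompact B → B ⊆ U →
    Tendsto (fun k : ℕ => hausdorffDist ((Hutch f)^[k] B) A) atTop (nhds 0)

/-- `A` is an attractor of the IFS `f`: a nonempty compact set admitting an open
neighbourhood `U ⊇ A` all of whose nonempty compact subsets are attracted to `A`. -/
def IsAttractor (f : Λ → X → X) (A : Set X) : Prop :=
  A.Nonempty ∧ IsCompact A ∧ ∃ U : Set X, IsOpen U ∧ A ⊆ U ∧ Attracts f A U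

/-- The basin of the attractor `A`: the union of all open `U ⊇ A` from which `A` attracts. -/
def basin (f : Λ → X → X) (A : Set X) : Set X :=
  ⋃₀ {U : Set X | IsOpen U ∧ A ⊆ U ∧ Attracts f A U}

/-- The chaos game orbit of `x₀` driven by the sequence `σ` (0-indexed: `σ 0` acts first). -/
def orbit (f : Λ → X → X) (σ : ℕ → Λ) (x₀ : X) : ℕ → X
  | 0 => x₀
  | k + 1 => f (σ k) (orbit f σ x₀ k)

/-- `C_K(x₀,σ)`: the closure of the tail `{x_k : k ≥ K}` of the chaos game orbit. -/
def tailSet (f : Λ → X → X) (σ : ℕ → Λ) (x₀ : X) (K : ℕ) : Set X :=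
  closure {y : X | ∃ k : ℕ, K ≤ k ∧ orbit f σ x₀ k = y}

/-- `C_∞(x₀,σ) = ⋂_K C_K(x₀,σ)`. -/
def Cinf (f : Λ → X → X) (σ : ℕ → Λ) (x₀ : X) : Set X :=
  ⋂ K : ℕ, tailSet f σ x₀ K

/-- For a word `w = (σ₁, …, σ_m)`, `wordApply f w = f_{σ_m} ∘ ⋯ ∘ f_{σ_1}`
(the letter `w 0` acts first). -/
def wordApply (f : Λ → X → X) {m : ℕ} (w : Fin m → Λ) (x : X) : X :=
  (List.ofFn w).foldl (fun y a => f a y) x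

/-- A sequence of symbols is disjunctive if it contains every finite word
as a block of consecutive letters. -/
def Disjunctive {Γ : Type*} (σ : ℕ → Γ) : Prop :=
  ∀ (m : ℕ) (w : Fin m → Γ), ∃ j : ℕ, ∀ l : Fin m, σ (j + l.1) = w l

/-- `fibreComp f ρ K = f_{ρ_1} ∘ f_{ρ_2} ∘ ⋯ ∘ f_{ρ_K}` (0-indexed: `f (ρ 0) ∘ ⋯ ∘ f (ρ (K-1))`). -/
def fibreComp (f : Λ → X → X) (ρ : ℕ → Λ) : ℕ → X → X
  | 0 => id
  | K + 1 => fibreComp f ρ K ∘ f (ρ K)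

/-- The fibre `A_ρ = ⋂_{K ≥ 1} f_{ρ_1} ∘ ⋯ ∘ f_{ρ_K}(A)` of the attractor `A`. -/
def fibre (f : Λ → X → X) (A : Set X) (ρ : ℕ → Λ) : Set X :=
  ⋂ K : ℕ, fibreComp f ρ (K + 1) '' A

/-- `A` is strongly fibred: every open set meeting `A` contains a fibre. -/
def StronglyFibred (f : Λ → X → X) (A : Set X) : Prop :=
  ∀ U : Set X, IsOpen U → (U ∩ A).Nonempty → ∃ ρ : ℕ → Λ, fibre f A ρ ⊆ U

section ThickeningCovers

variable {α : Type*} [PseudoMetricSpace α]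

theorem totallyBounded_of_forall_subset_thickening {s : Set α}
    (h : ∀ ε > 0, ∃ t, TotallyBounded t ∧ s ⊆ thickening ε t) : TotallyBounded s := by
  refine Metric.totallyBounded_iff.2 fun ε hε => ?_
  obtain ⟨t, ht, hst⟩ := h (ε / 2) (half_pos hε)
  obtain ⟨F, hF, htF⟩ := Metric.totallyBounded_iff.1 ht (ε / 2) (half_pos hε)
  refine ⟨F, hF, ?_⟩
  rw [← thickening_eq_biUnion_ball] at htF ⊢
  calc s ⊆ thickening (ε / 2) t := hst
    _ ⊆ thickening (ε / 2) (thickening (ε / 2) F) := thickening_subset_of_subset _ htF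
    _ ⊆ thickening ε F := by
      simpa only [add_halves] using thickening_thickening_subset (ε / 2) (ε / 2) F

theorem totallyBounded_range_of_eventually_mem_thickening {u : ℕ → α} {A : Set α}
    (hA : TotallyBounded A) (hu : ∀ ε > 0, ∀ᶠ k in atTop, u k ∈ thickening ε A) :
    TotallyBounded (range u) := by
  refine totallyBounded_of_forall_subset_thickening fun ε hε => ?_
  obtain ⟨N, hN⟩ := eventually_atTop.1 (hu ε hε)
  refine ⟨u '' Iio N ∪ A, ((finite_Iio N).image u).totallyBounded.union hA, ?_⟩
  rintro _ ⟨k, rfl⟩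
  rcases lt_or_ge k N with hk | hk
  · exact self_subset_thickening hε _ (Or.inl ⟨k, hk, rfl⟩)
  · exact thickening_subset_of_subset ε subset_union_right (hN k hk)

theorem tendsto_hausdorffDist_iInter_of_antitone {K : ℕ → Set α} (hK : Antitone K)
    (hcomp : ∀ n, IsCompact (K n)) (hclosed : ∀ n, IsClosed (K n)) :
    Tendsto (fun n => hausdorffDist (K n) (⋂ n, K n)) atTop (nhds 0) := by
  refine Metric.tendsto_atTop.2 fun ε hε => ?_
  obtain ⟨N, hN⟩ := exists_subset_nhds_of_isCompact' hK.directed_ge hcomp hclosed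
    fun x hx => isOpen_thickening.mem_nhds (self_subset_thickening (half_pos hε) _ hx)
  refine ⟨N, fun n hn => ?_⟩
  have hdist : hausdorffDist (K n) (⋂ n, K n) ≤ ε / 2 := by
    refine hausdorffDist_le_of_mem_dist (half_pos hε).le (fun x hx => ?_)
      fun x hx => ⟨x, mem_iInter.1 hx n, (dist_self x).trans_le (half_pos hε).le⟩
    obtain ⟨z, hz, hxz⟩ := mem_thickening_iff.1 (hN (hK hn hx))
    exact ⟨z, hz, hxz.le⟩
  rw [Real.dist_eq, sub_zero, abs_of_nonneg hausdorffDist_nonneg]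
  linarith

end ThickeningCovers

section ChaosGame

variable {α ι : Type*}

theorem Set.Finite.hutch_iterate [Finite ι] (f : ι → α → α) {B : Set α} (hB : B.Finite) :
    ∀ k : ℕ, ((Hutch f)^[k] B).Finite
  | 0 => hB
  | k + 1 => by
    rw [Function.iterate_succ_apply']
    exact finite_iUnion fun a => (hB.hutch_iterate f k).image (f a)

theorem orbit_mem_hutch_iterate (f : ι → α → α) (σ : ℕ → ι) (x₀ : α) :
    ∀ k : ℕ, orbit f σ x₀ k ∈ (Hutch f)^[k] {x₀}
  | 0 => rfl
  | k + 1 => by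
    rw [Function.iterate_succ_apply']
    exact mem_iUnion.2 ⟨σ k, mem_image_of_mem _ (orbit_mem_hutch_iterate f σ x₀ k)⟩

variable [MetricSpace α] {f : ι → α → α} {σ : ℕ → ι} {x₀ : α}

theorem eventually_orbit_mem_thickening [Finite ι] {A U : Set α} (hA : A.Nonempty)
    (hAb : Bornology.IsBounded A) (hU : Attracts f A U) (hx₀ : x₀ ∈ U) (σ : ℕ → ι) {ε : ℝ}
    (hε : 0 < ε) :
    ∀ᶠ k in atTop, orbit f σ x₀ k ∈ thickening ε A := by
  have hconv := hU {x₀} (singleton_nonempty x₀) isCompact_singleton (singleton_subset_iff.2 hx₀)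
  filter_upwards [hconv.eventually (gt_mem_nhds hε)] with k hk
  have hk_mem := orbit_mem_hutch_iterate f σ x₀ k
  have hfin := hausdorffEDist_ne_top_of_nonempty_of_bounded ⟨_, hk_mem⟩ hA
    ((finite_singleton x₀).hutch_iterate f k).isBounded hAb
  exact (mem_thickening_iff_infDist_lt hA).2
    ((infDist_le_hausdorffDist_of_mem hk_mem hfin).trans_lt hk)

theorem totallyBounded_range_orbit [Finite ι] {A : Set α} (hA : IsAttractor f A)
    (hx₀ : x₀ ∈ basin f A) (σ : ℕ → ι) : TotallyBounded (range (orbit f σ x₀)) := by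
  obtain ⟨hAne, hAc, -⟩ := hA
  obtain ⟨U, ⟨-, -, hU⟩, hx₀U⟩ := hx₀
  exact totallyBounded_range_of_eventually_mem_thickening hAc.totallyBounded
    fun ε hε => eventually_orbit_mem_thickening hAne hAc.isBounded hU hx₀U σ hε

theorem tailSet_antitone : Antitone (tailSet f σ x₀) := by
  intro K L hKL
  refine closure_mono ?_
  rintro _ ⟨k, hk, rfl⟩
  exact ⟨k, hKL.trans hk, rfl⟩

theorem tailSet_nonempty (K : ℕ) : (tailSet f σ x₀ K).Nonempty :=
  ⟨orbit f σ x₀ K, subset_closure ⟨K, le_rfl, rfl⟩⟩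

theorem isClosed_tailSet (K : ℕ) : IsClosed (tailSet f σ x₀ K) := isClosed_closure

theorem isCompact_tailSet [CompleteSpace α] (h : TotallyBounded (range (orbit f σ x₀)))
    (K : ℕ) : IsCompact (tailSet f σ x₀ K) := by
  have htail : {y | ∃ k, K ≤ k ∧ orbit f σ x₀ k = y} ⊆ range (orbit f σ x₀) :=
    fun _ ⟨k, _, hk⟩ => ⟨k, hk⟩
  exact (h.subset htail).closure.isCompact_of_isClosed (isClosed_tailSet K)

end ChaosGame

theorem chaosGame_tailSets_general
    (f : Λ → X → X)
    (A : Set X) (hA : IsAttractor f A)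
    (x₀ : X) (hx₀ : x₀ ∈ basin f A) (σ : ℕ → Λ) :
    TotallyBounded (Set.range (orbit f σ x₀)) ∧
    (∀ K : ℕ, (tailSet f σ x₀ K).Nonempty ∧ IsCompact (tailSet f σ x₀ K) ∧
      tailSet f σ x₀ (K + 1) ⊆ tailSet f σ x₀ K) ∧
    (Cinf f σ x₀).Nonempty ∧ IsCompact (Cinf f σ x₀) ∧
    Tendsto (fun K : ℕ => hausdorffDist (tailSet f σ x₀ K) (Cinf f σ x₀)) atTop (nhds 0) := by
  have hTB := totallyBounded_range_orbit hA hx₀ σ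
  have hcomp := isCompact_tailSet hTB
  refine ⟨hTB, fun K => ⟨tailSet_nonempty K, hcomp K, tailSet_antitone K.le_succ⟩, ?_, ?_,
    tendsto_hausdorffDist_iInter_of_antitone tailSet_antitone hcomp isClosed_tailSet⟩
  · exact IsCompact.nonempty_iInter_of_sequence_nonempty_isCompact_isClosed _
      (fun K => tailSet_antitone K.le_succ) tailSet_nonempty (hcomp 0) isClosed_tailSet
  · exact (hcomp 0).of_isClosed_subset (isClosed_iInter isClosed_tailSet) (iInter_subset _ 0)

/-- the chaos game orbit is totally bounded; the tail sets
`C_K(x₀,σ)` form a decreasing sequence of nonempty compact sets converging in the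
Hausdorff metric to the nonempty compact set `C_∞(x₀,σ) = ⋂_K C_K(x₀,σ)`. -/
theorem chaosGame_tailSets
    (f : Λ → X → X) (hf : ∀ a : Λ, Continuous (f a))
    (A : Set X) (hA : IsAttractor f A)
    (x₀ : X) (hx₀ : x₀ ∈ basin f A) (σ : ℕ → Λ) :
    TotallyBounded (Set.range (orbit f σ x₀)) ∧
    (∀ K : ℕ, (tailSet f σ x₀ K).Nonempty ∧ IsCompact (tailSet f σ x₀ K) ∧
      tailSet f σ x₀ (K + 1) ⊆ tailSet f σ x₀ K) ∧
    (Cinf f σ x₀).Nonempty ∧ IsCompact (Cinf f σ x₀) ∧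
    Tendsto (fun K : ℕ => hausdorffDist (tailSet f σ x₀ K) (Cinf f σ x₀)) atTop (nhds 0) :=
  chaosGame_tailSets_general f A hA x₀ hx₀ σ
end

section
/- Let A be an attractor of the IFS F with basin B(A), let x_0 ∈ B(A) and let σ ∈ Σ^∞. Then C_∞(x_0,σ) ⊆ A. -/
open Metric Filter Set MeasureTheory

variable {X : Type*} [MetricSpace X] [CompleteSpace X]
variable {Λ : Type*} [Fintype Λ] [Nonempty Λ]

/-! The chaos game point `x_k` lies in `F^k({x₀})`, and these sets converge to `A` in the
Hausdorff metric because `{x₀}` is a compact subset of the basin. Hence `dist(x_k, A) → 0`, so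
every cluster point of the orbit, i.e. every point of `C_∞(x₀,σ)`, lies in the closed set `A`.
The sets `F^k({x₀})` are finite, so their Hausdorff distance to `A` is not the junk value
`0` that `hausdorffDist` takes when the extended distance is infinite. -/

theorem Set.Finite.hutch {ι Y : Type*} [Finite ι] (f : ι → Y → Y) {B : Set Y} (hB : B.Finite) :
    (Hutch f B).Finite :=
  finite_iUnion fun a => hB.image (f a)

theorem Set.Finite.iterate_hutch {ι Y : Type*} [Finite ι] (f : ι → Y → Y) {B : Set Y}
    (hB : B.Finite) (k : ℕ) : ((Hutch f)^[k] B).Finite := by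
  induction k with
  | zero => exact hB
  | succ k ih =>
    rw [Function.iterate_succ_apply']
    exact ih.hutch f

theorem orbit_mem_iterate_hutch {ι Y : Type*} (f : ι → Y → Y) (σ : ℕ → ι) (x₀ : Y) (k : ℕ) :
    orbit f σ x₀ k ∈ (Hutch f)^[k] {x₀} := by
  induction k with
  | zero => exact mem_singleton x₀
  | succ k ih =>
    rw [Function.iterate_succ_apply']
    exact mem_iUnion.2 ⟨σ k, mem_image_of_mem _ ih⟩

theorem mem_Cinf_iff_mapClusterPt {ι Y : Type*} [MetricSpace Y] {f : ι → Y → Y} {σ : ℕ → ι}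
    {x₀ y : Y} : y ∈ Cinf f σ x₀ ↔ MapClusterPt y atTop (orbit f σ x₀) := by
  rw [mapClusterPt_atTop_iff_forall_mem_closure]
  exact mem_iInter

theorem tendsto_infDist_of_tendsto_hausdorffDist {α Y : Type*} [PseudoMetricSpace Y]
    {l : Filter α} {u : α → Y} {S : α → Set Y} {A : Set Y} (hu : ∀ a, u a ∈ S a)
    (hS : ∀ a, Bornology.IsBounded (S a)) (hA : A.Nonempty) (hAb : Bornology.IsBounded A)
    (h : Tendsto (fun a => hausdorffDist (S a) A) l (nhds 0)) :
    Tendsto (fun a => infDist (u a) A) l (nhds 0) :=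
  squeeze_zero (fun _ => infDist_nonneg)
    (fun a => infDist_le_hausdorffDist_of_mem (hu a)
      (hausdorffEDist_ne_top_of_nonempty_of_bounded ⟨_, hu a⟩ hA (hS a) hAb)) h

theorem MapClusterPt.mem_of_tendsto_infDist {α Y : Type*} [PseudoMetricSpace Y] {l : Filter α}
    {u : α → Y} {A : Set Y} {y : Y} (hy : MapClusterPt y l u) (hA : IsClosed A)
    (hAne : A.Nonempty) (h : Tendsto (fun a => infDist (u a) A) l (nhds 0)) : y ∈ A := by
  rw [hA.mem_iff_infDist_zero hAne]
  exact eq_of_nhds_neBot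
    ((hy.continuousAt_comp (continuous_infDist_pt A).continuousAt).clusterPt.mono h)

theorem chaosGame_Cinf_subset_attractor_general
    (f : Λ → X → X)
    (A : Set X) (hA : IsAttractor f A)
    (x₀ : X) (hx₀ : x₀ ∈ basin f A) (σ : ℕ → Λ) :
    Cinf f σ x₀ ⊆ A := by
  obtain ⟨hAne, hAc, -⟩ := hA
  obtain ⟨U, ⟨-, -, hUattr⟩, hx₀U⟩ := hx₀
  have hiter : Tendsto (fun k => hausdorffDist ((Hutch f)^[k] {x₀}) A) atTop (nhds 0) :=
    hUattr {x₀} (singleton_nonempty x₀) isCompact_singleton (singleton_subset_iff.2 hx₀U)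
  have horbit : Tendsto (fun k => infDist (orbit f σ x₀ k) A) atTop (nhds 0) :=
    tendsto_infDist_of_tendsto_hausdorffDist (orbit_mem_iterate_hutch f σ x₀)
      (fun k => ((finite_singleton x₀).iterate_hutch f k).isBounded) hAne hAc.isBounded hiter
  exact fun y hy =>
    (mem_Cinf_iff_mapClusterPt.1 hy).mem_of_tendsto_infDist hAc.isClosed hAne horbit

/-- Lemma 1: `C_∞(x₀,σ) ⊆ A` for every `x₀` in the basin of `A`
and every `σ ∈ Σ^∞`. -/
theorem chaosGame_Cinf_subset_attractor
    (f : Λ → X → X) (hf : ∀ a : Λ, Continuous (f a))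
    (A : Set X) (hA : IsAttractor f A)
    (x₀ : X) (hx₀ : x₀ ∈ basin f A) (σ : ℕ → Λ) :
    Cinf f σ x₀ ⊆ A :=
  chaosGame_Cinf_subset_attractor_general f A hA x₀ hx₀ σ
end

section
/- Let Σ be a finite nonempty alphabet, let τ = (τ_1, …, τ_m) ∈ Σ^m with m ≥ 1 and let p ≥ 1. Then the set Ψ(τ,p) = {(σ_i)_{i≥1} ∈ Σ^∞ : there is no k ≥ p with τ_l = σ_{(k-1)+l} for all l = 1, …, m}, consisting of sequences that do not contain the word τ from the p-th position onwards, is a Borel subset of the Cantor space (Σ^∞, ϱ) and is porous with respect to the Baire metric ϱ. -/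
/-!
Containing `τ` from position `p` on is witnessed by finitely many coordinates, so it is an open
condition and its negation is closed. For porosity, let `2^{-(n+1)} < r ≤ 2^{-n}` with `n ≥ p`:
the sequence that agrees with `ψ` up to position `n` and then spells `τ` lies in the `r`-ball
around `ψ`, and every sequence within `2^{-m-1} r` of it still spells `τ` there.
-/

open Metric Filter Set MeasureTheory


open Classical in
/-- The Baire metric `ϱ(x,y) = 2^{-min{i ≥ 1 : x_i ≠ y_i}}` on the Cantor space of
(0-indexed) sequences: here `min` of the 1-indexed paper corresponds to `sInf + 1`. -/
noncomputable def baireDist {Γ : Type*} (x y : ℕ → Γ) : ℝ :=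
  if x = y then 0 else (2 : ℝ) ^ (-((sInf {i : ℕ | x i ≠ y i} : ℕ) : ℤ) - 1)

/-- `Ψ` is porous with respect to the distance function `ρ`. -/
def PorousWith {M : Type*} (ρ : M → M → ℝ) (Ψ : Set M) : Prop :=
  ∃ lam : ℝ, 0 < lam ∧ lam < 1 ∧ ∃ r₀ : ℝ, 0 < r₀ ∧
    ∀ ψ ∈ Ψ, ∀ r : ℝ, 0 < r → r < r₀ →
      ∃ υ : M, {x : M | ρ υ x < lam * r} ⊆ {x : M | ρ ψ x < r} \ Ψ

/-- `Ψ` is σ-porous with respect to `ρ`: a countable union of porous sets. -/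
def SigmaPorousWith {M : Type*} (ρ : M → M → ℝ) (Ψ : Set M) : Prop :=
  ∃ c : ℕ → Set M, (∀ n : ℕ, PorousWith ρ (c n)) ∧ Ψ = ⋃ n : ℕ, c n

section BaireDist

variable {Γ : Type*}

theorem baireDist_lt_two_zpow_iff {x y : ℕ → Γ} {N : ℕ} :
    baireDist x y < (2 : ℝ) ^ (-(N : ℤ)) ↔ ∀ i < N, x i = y i := by
  unfold baireDist
  split_ifs with hxy
  · simp [hxy]
  · have hne : {i : ℕ | x i ≠ y i}.Nonempty := by
      by_contra hc
      exact hxy (funext fun i => by_contra fun hi => hc ⟨i, hi⟩)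
    rw [zpow_lt_zpow_iff_right₀ one_lt_two]
    constructor
    · intro h i hi
      by_contra hne'
      have := Nat.sInf_le (s := {i | x i ≠ y i}) hne'
      omega
    · intro h
      have := Nat.sInf_mem hne
      by_contra! hle
      exact this (h _ (by omega))

theorem exists_two_zpow_lt_le {r : ℝ} {p : ℕ} (hr : 0 < r) (hrp : r < (2 : ℝ) ^ (-(p : ℤ))) :
    ∃ n : ℕ, p ≤ n ∧ (2 : ℝ) ^ (-((n + 1 : ℕ) : ℤ)) < r ∧ r ≤ (2 : ℝ) ^ (-(n : ℤ)) := by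
  obtain ⟨e, he, her⟩ := exists_mem_Ioc_zpow hr one_lt_two
  have hep : e + 1 ≤ -(p : ℤ) :=
    Int.add_one_le_of_lt <| (zpow_lt_zpow_iff_right₀ one_lt_two).mp (he.trans hrp)
  obtain ⟨n, hn⟩ := Int.eq_ofNat_of_zero_le (a := -(e + 1)) (by omega)
  obtain rfl : e = -(n : ℤ) - 1 := by omega
  exact ⟨n, by omega, by rwa [Nat.cast_succ, neg_add'], by simpa using her⟩

theorem porousWith_baireDist_of_exists_cylinder_disjoint {Ψ : Set (ℕ → Γ)} (c p : ℕ)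
    (h : ∀ ψ ∈ Ψ, ∀ n, p ≤ n → ∃ υ : ℕ → Γ, (∀ i < n, υ i = ψ i) ∧
      ∀ x : ℕ → Γ, (∀ i < n + c, υ i = x i) → x ∉ Ψ) :
    PorousWith baireDist Ψ := by
  refine ⟨(2 : ℝ) ^ (-(c : ℤ) - 1), by positivity,
    zpow_lt_one_of_neg₀ one_lt_two (by omega), (2 : ℝ) ^ (-(p : ℤ)), by positivity, ?_⟩
  intro ψ hψ r hr hrp
  obtain ⟨n, hpn, hnr, hrn⟩ := exists_two_zpow_lt_le hr hrp
  obtain ⟨υ, hυψ, hυ⟩ := h ψ hψ (n + 1) (by omega)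
  refine ⟨υ, fun x hx => ?_⟩
  have hυx : ∀ i < n + 1 + c, υ i = x i := by
    refine baireDist_lt_two_zpow_iff.mp ?_
    calc baireDist υ x < (2 : ℝ) ^ (-(c : ℤ) - 1) * r := hx
      _ ≤ (2 : ℝ) ^ (-(c : ℤ) - 1) * (2 : ℝ) ^ (-(n : ℤ)) := by gcongr
      _ = (2 : ℝ) ^ (-((n + 1 + c : ℕ) : ℤ)) := by
        rw [← zpow_add₀ two_ne_zero]; congr 1; push_cast; ring
  have hψx : baireDist ψ x < (2 : ℝ) ^ (-((n + 1 : ℕ) : ℤ)) :=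
    baireDist_lt_two_zpow_iff.mpr fun i hi => (hυψ i hi).symm.trans (hυx i (by omega))
  exact ⟨hψx.trans hnr, hυ x hυx⟩

end BaireDist

section Word

variable {Γ : Type*} {m : ℕ}

def insertWord (ψ : ℕ → Γ) (n : ℕ) (τ : Fin m → Γ) : ℕ → Γ :=
  fun i => if h : n ≤ i ∧ i < n + m then τ ⟨i - n, by omega⟩ else ψ i

theorem insertWord_of_lt (ψ : ℕ → Γ) (τ : Fin m → Γ) {n i : ℕ} (hi : i < n) :
    insertWord ψ n τ i = ψ i :=
  dif_neg (by omega)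

theorem insertWord_add (ψ : ℕ → Γ) (τ : Fin m → Γ) (n : ℕ) (l : Fin m) :
    insertWord ψ n τ (n + l) = τ l := by
  rw [insertWord, dif_pos (by omega)]
  simp

/-- Positions `k` are 1-indexed as in the paper, whence `k - 1` for 0-indexed sequences. -/
def occurrenceSet (τ : Fin m → Γ) (p : ℕ) : Set (ℕ → Γ) :=
  {x | ∃ k : ℕ, p ≤ k ∧ ∀ l : Fin m, x (k - 1 + l.1) = τ l}

theorem isOpen_occurrenceSet [TopologicalSpace Γ] [DiscreteTopology Γ] (τ : Fin m → Γ)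
    (p : ℕ) : IsOpen (occurrenceSet τ p) := by
  have hunion : occurrenceSet τ p = ⋃ k ≥ p, (fun x (l : Fin m) => x (k - 1 + l)) ⁻¹' {τ} := by
    ext x
    simp [occurrenceSet, funext_iff]
  rw [hunion]
  exact isOpen_biUnion fun k _ =>
    (isOpen_discrete {τ}).preimage (continuous_pi fun l => continuous_apply _)

theorem porousWith_baireDist_compl_occurrenceSet (τ : Fin m → Γ) (p : ℕ) :
    PorousWith baireDist (occurrenceSet τ p)ᶜ := by
  refine porousWith_baireDist_of_exists_cylinder_disjoint m p fun ψ _ n hpn =>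
    ⟨insertWord ψ n τ, fun i hi => insertWord_of_lt ψ τ hi, fun x hx => not_not_intro ?_⟩
  refine ⟨n + 1, by omega, fun l => ?_⟩
  rw [Nat.add_sub_cancel, ← hx _ (by omega), insertWord_add]

end Word

theorem avoidingSet_borel_and_porous_general
    {Γ : Type*} [TopologicalSpace Γ] [DiscreteTopology Γ]
    (m : ℕ) (τ : Fin m → Γ) (p : ℕ) :
    MeasurableSet[borel (ℕ → Γ)]
        {x : ℕ → Γ | ¬ ∃ k : ℕ, p ≤ k ∧ ∀ l : Fin m, x (k - 1 + l.1) = τ l} ∧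
    PorousWith baireDist
        {x : ℕ → Γ | ¬ ∃ k : ℕ, p ≤ k ∧ ∀ l : Fin m, x (k - 1 + l.1) = τ l} :=
  ⟨(MeasurableSpace.measurableSet_generateFrom (isOpen_occurrenceSet τ p)).compl,
    porousWith_baireDist_compl_occurrenceSet τ p⟩

/-- Lemma "nontaustrings": for a word `τ ∈ Σ^m` (`m ≥ 1`) and `p ≥ 1`,
the set `Ψ(τ,p)` of sequences not containing `τ` from the `p`-th position onwards is a
Borel and porous subset of the Cantor space with the Baire metric. -/
theorem avoidingSet_borel_and_porous
    {Γ : Type*} [Fintype Γ] [Nonempty Γ] [TopologicalSpace Γ] [DiscreteTopology Γ]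
    (m : ℕ) (hm : 1 ≤ m) (τ : Fin m → Γ) (p : ℕ) (hp : 1 ≤ p) :
    MeasurableSet[borel (ℕ → Γ)]
        {x : ℕ → Γ | ¬ ∃ k : ℕ, p ≤ k ∧ ∀ l : Fin m, x (k - 1 + l.1) = τ l} ∧
    PorousWith baireDist
        {x : ℕ → Γ | ¬ ∃ k : ℕ, p ≤ k ∧ ∀ l : Fin m, x (k - 1 + l.1) = τ l} :=
  avoidingSet_borel_and_porous_general m τ p
end

section
/- Let (Z_n)_{n≥1} be a homogeneous Markov chain with values in a finite alphabet Σ whose initial distribution is strictly positive (Pr(Z_1 = σ) > 0 for every σ ∈ Σ). Then (Z_n)_{n≥1} is a disjunctive process if and only if the transition matrix has all entries positive, i.e. Pr(Z_{n+1} = τ | Z_n = σ) > 0 for all σ, τ ∈ Σ. -/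
open Filter Set MeasureTheory
open scoped ENNReal

/-!
Conditioning on the whole history extends from cylinders to every event `A` determined by
`Z 0, …, Z n`: `Pr (A ∩ {Z (n + 1) = b}) = ∑ a, P a b * Pr (A ∩ {Z n = a})`.
If `P a b = 0`, the word `a b` therefore occurs at no position almost surely.
If every `P a b ≥ ε > 0`, then whatever the history, a word of length `m` follows it with
probability at least `ε ^ m`; so it is missing from `K` consecutive disjoint blocks with
probability at most `(1 - ε ^ m) ^ K → 0`.
-/

lemma MeasureTheory.measure_eq_sum_inter_preimage_singleton {α β : Type*} [MeasurableSpace α]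
    [Fintype β] {μ : Measure α} {f : α → β} (hf : ∀ b, MeasurableSet (f ⁻¹' {b})) (B : Set α) :
    μ B = ∑ b, μ (B ∩ f ⁻¹' {b}) := by
  have h := sum_measure_preimage_singleton (μ := μ.restrict B) Finset.univ fun b _ => hf b
  simp only [Finset.coe_univ, preimage_univ, Measure.restrict_apply_univ,
    Measure.restrict_apply (hf _)] at h
  simp_rw [← h, inter_comm]

lemma MeasureTheory.measure_iInter_eq_zero_of_le_mul {α : Type*} [MeasurableSpace α]
    {μ : Measure α} [IsFiniteMeasure μ] {E : ℕ → Set α} {r : ℝ≥0∞} (hr : r < 1)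
    (hE : ∀ K, μ (E (K + 1)) ≤ r * μ (E K)) : μ (⋂ K, E K) = 0 := by
  have hpow : ∀ K, μ (E K) ≤ r ^ K * μ (E 0) := by
    intro K
    induction K with
    | zero => simp
    | succ K ih =>
      calc μ (E (K + 1)) ≤ r * μ (E K) := hE K
        _ ≤ r * (r ^ K * μ (E 0)) := by gcongr
        _ = r ^ (K + 1) * μ (E 0) := by ring
  have hlim : Tendsto (fun K => r ^ K * μ (E 0)) atTop (nhds 0) := by
    simpa using ENNReal.Tendsto.mul_const (ENNReal.tendsto_pow_atTop_nhds_zero_of_lt_one hr)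
      (Or.inr (measure_ne_top μ _))
  exact le_antisymm (ge_of_tendsto' hlim fun K => (measure_mono (iInter_subset E K)).trans (hpow K))
    zero_le

namespace RandomSequence

variable {Γ S : Type*}

def history (Z : ℕ → S → Γ) (N : ℕ) (s : S) : Fin N → Γ := fun i => Z i s

def DeterminedBy (Z : ℕ → S → Γ) (N : ℕ) (A : Set S) : Prop :=
  ∀ ⦃s s'⦄, history Z N s = history Z N s' → s ∈ A → s' ∈ A

def occursAt (Z : ℕ → S → Γ) (c : ℕ) {m : ℕ} (τ : Fin m → Γ) : Set S :=
  {s | ∀ l : Fin m, Z (c + l) s = τ l}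

def IsMarkovChain [MeasurableSpace S] (Pr : Measure S) (Z : ℕ → S → Γ) (P : Γ → Γ → ℝ≥0∞) :
    Prop :=
  ∀ (n : ℕ) (w : Fin (n + 1) → Γ) (t : Γ),
    Pr {s : S | (∀ i : Fin (n + 1), Z i.1 s = w i) ∧ Z (n + 1) s = t}
      = P (w (Fin.last n)) t * Pr {s : S | ∀ i : Fin (n + 1), Z i.1 s = w i}

variable {Z : ℕ → S → Γ}

lemma history_apply_eq {N : ℕ} {s s' : S} (h : history Z N s = history Z N s') {i : ℕ}
    (hi : i < N) : Z i s = Z i s' :=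
  congrFun h ⟨i, hi⟩

namespace DeterminedBy

variable {N : ℕ} {A B : Set S}

lemma mono (hA : DeterminedBy Z N A) {M : ℕ} (hNM : N ≤ M) : DeterminedBy Z M A :=
  fun _ _ h => hA (funext fun i => history_apply_eq h (i.2.trans_le hNM))

lemma inter (hA : DeterminedBy Z N A) (hB : DeterminedBy Z N B) : DeterminedBy Z N (A ∩ B) :=
  fun _ _ h hs => ⟨hA h hs.1, hB h hs.2⟩

lemma compl (hA : DeterminedBy Z N A) : DeterminedBy Z N Aᶜ :=
  fun _ _ h hs hs' => hs (hA h.symm hs')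

lemma eq_preimage_image (hA : DeterminedBy Z N A) :
    A = history Z N ⁻¹' (history Z N '' A) :=
  (subset_preimage_image _ _).antisymm fun _ ⟨_, hs', h⟩ => hA h hs'

end DeterminedBy

lemma determinedBy_preimage {i N : ℕ} (hi : i < N) (a : Γ) :
    DeterminedBy Z N (Z i ⁻¹' {a}) :=
  fun _ _ h hs => (history_apply_eq h hi).symm.trans hs

lemma determinedBy_occursAt (c : ℕ) {m : ℕ} (τ : Fin m → Γ) :
    DeterminedBy Z (c + m) (occursAt Z c τ) :=
  fun _ _ h hs l => (history_apply_eq h (by omega)).symm.trans (hs l)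

lemma occursAt_succ (c : ℕ) {m : ℕ} (τ : Fin (m + 1) → Γ) :
    occursAt Z c τ = occursAt Z c (Fin.init τ) ∩ Z (c + m) ⁻¹' {τ (Fin.last m)} := by
  ext s
  simp only [occursAt, Fin.forall_fin_succ' (n := m), Fin.init, mem_ofPred_eq, mem_inter_iff,
    mem_preimage, mem_singleton_iff, Fin.val_castSucc, Fin.val_last]

variable [MeasurableSpace S]

lemma IsMarkovChain.measure_history_inter {Pr : Measure S} {P : Γ → Γ → ℝ≥0∞}
    (h : IsMarkovChain Pr Z P) {n : ℕ} (w : Fin (n + 1) → Γ) (t : Γ) :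
    Pr (history Z (n + 1) ⁻¹' {w} ∩ Z (n + 1) ⁻¹' {t})
      = P (w (Fin.last n)) t * Pr (history Z (n + 1) ⁻¹' {w}) := by
  have hw : history Z (n + 1) ⁻¹' {w} = {s | ∀ i : Fin (n + 1), Z i.1 s = w i} := by
    ext s
    simp [history, funext_iff]
  rw [hw, ← h n w t]
  rfl

variable [MeasurableSpace Γ] [MeasurableSingletonClass Γ]

lemma measurableSet_history_preimage [Finite Γ] (hZ : ∀ n, Measurable (Z n)) (N : ℕ)
    (W : Set (Fin N → Γ)) : MeasurableSet (history Z N ⁻¹' W) :=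
  measurable_pi_lambda (history Z N) (fun i => hZ i) W.toFinite.measurableSet

lemma DeterminedBy.measurableSet [Finite Γ] (hZ : ∀ n, Measurable (Z n)) {N : ℕ} {A : Set S}
    (hA : DeterminedBy Z N A) : MeasurableSet A := by
  rw [hA.eq_preimage_image]
  exact measurableSet_history_preimage hZ N _

lemma DeterminedBy.measure_eq [Finite Γ] (hZ : ∀ n, Measurable (Z n)) {N : ℕ} {A : Set S}
    (hA : DeterminedBy Z N A) {μ ν : Measure S}
    (h : ∀ s ∈ A, μ (history Z N ⁻¹' {history Z N s}) = ν (history Z N ⁻¹' {history Z N s})) :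
    μ A = ν A := by
  set W := (history Z N '' A).toFinite.toFinset
  have hW : A = history Z N ⁻¹' W := by rw [Finite.coe_toFinset]; exact hA.eq_preimage_image
  have hfib : ∀ w ∈ W, MeasurableSet (history Z N ⁻¹' {w}) :=
    fun w _ => measurableSet_history_preimage hZ N {w}
  rw [hW, ← sum_measure_preimage_singleton W hfib, ← sum_measure_preimage_singleton W hfib]
  refine Finset.sum_congr rfl fun w hw => ?_
  obtain ⟨s, hs, rfl⟩ := (Finite.mem_toFinset _).1 hw
  exact h s hs

namespace IsMarkovChain

variable {Pr : Measure S} {P : Γ → Γ → ℝ≥0∞}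

lemma measure_inter_preimage [Finite Γ] (h : IsMarkovChain Pr Z P) (hZ : ∀ n, Measurable (Z n))
    {n : ℕ} {A : Set S} (hA : DeterminedBy Z (n + 1) A) {a : Γ} (hAa : A ⊆ Z n ⁻¹' {a})
    (b : Γ) : Pr (A ∩ Z (n + 1) ⁻¹' {b}) = P a b * Pr A := by
  rw [← Measure.restrict_apply (hA.measurableSet hZ)]
  change _ = (P a b • Pr) A
  refine hA.measure_eq hZ fun s hs => ?_
  rw [Measure.restrict_apply (measurableSet_history_preimage hZ _ _), measure_history_inter h,
    Measure.smul_apply, smul_eq_mul]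
  exact congrArg (P · b * _) (hAa hs)

lemma mul_measure_le_measure_inter [Fintype Γ] (h : IsMarkovChain Pr Z P)
    (hZ : ∀ n, Measurable (Z n)) {ε : ℝ≥0∞} (hε : ∀ a b, ε ≤ P a b) {n : ℕ} {A : Set S}
    (hA : DeterminedBy Z (n + 1) A) (b : Γ) : ε * Pr A ≤ Pr (A ∩ Z (n + 1) ⁻¹' {b}) := by
  have hfib : ∀ a, MeasurableSet (Z n ⁻¹' {a}) := fun a => hZ n (measurableSet_singleton a)
  calc ε * Pr A = ∑ a, ε * Pr (A ∩ Z n ⁻¹' {a}) := by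
        rw [measure_eq_sum_inter_preimage_singleton hfib A, Finset.mul_sum]
    _ ≤ ∑ a, P a b * Pr (A ∩ Z n ⁻¹' {a}) := by gcongr with a; exact hε a b
    _ = ∑ a, Pr (A ∩ Z n ⁻¹' {a} ∩ Z (n + 1) ⁻¹' {b}) := by
        refine Finset.sum_congr rfl fun a _ => (measure_inter_preimage h hZ ?_ ?_ b).symm
        · exact hA.inter (determinedBy_preimage n.lt_succ_self a)
        · exact inter_subset_right
    _ = Pr (A ∩ Z (n + 1) ⁻¹' {b}) := by
        rw [measure_eq_sum_inter_preimage_singleton hfib (A ∩ _)]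
        simp_rw [inter_right_comm]

lemma pow_mul_measure_le_measure_inter_occursAt [Fintype Γ] (h : IsMarkovChain Pr Z P)
    (hZ : ∀ n, Measurable (Z n)) {ε : ℝ≥0∞} (hε : ∀ a b, ε ≤ P a b) {n : ℕ} {A : Set S}
    (hA : DeterminedBy Z (n + 1) A) {m : ℕ} (τ : Fin m → Γ) :
    ε ^ m * Pr A ≤ Pr (A ∩ occursAt Z (n + 1) τ) := by
  induction m with
  | zero => simp [occursAt]
  | succ m ih =>
    have hdet : DeterminedBy Z (n + m + 1) (A ∩ occursAt Z (n + 1) (Fin.init τ)) :=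
      (hA.mono (by omega)).inter ((determinedBy_occursAt _ _).mono (by omega))
    calc ε ^ (m + 1) * Pr A = ε * (ε ^ m * Pr A) := by ring
      _ ≤ ε * Pr (A ∩ occursAt Z (n + 1) (Fin.init τ)) := by gcongr; exact ih _
      _ ≤ Pr (A ∩ occursAt Z (n + 1) (Fin.init τ) ∩ Z (n + m + 1) ⁻¹' {τ (Fin.last m)}) :=
        mul_measure_le_measure_inter h hZ hε hdet _
      _ = Pr (A ∩ occursAt Z (n + 1) τ) := by rw [occursAt_succ, ← inter_assoc, add_right_comm]

lemma pos_of_measure_iUnion_occursAt_ne_zero [Finite Γ] (h : IsMarkovChain Pr Z P)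
    (hZ : ∀ n, Measurable (Z n)) {a b : Γ} (hab : Pr (⋃ n, occursAt Z n ![a, b]) ≠ 0) :
    0 < P a b := by
  refine pos_iff_ne_zero.2 fun hab0 => hab (measure_iUnion_null fun n => ?_)
  have hpair : occursAt Z n ![a, b] = Z n ⁻¹' {a} ∩ Z (n + 1) ⁻¹' {b} := by
    ext s
    simp [occursAt, Fin.forall_fin_two]
  rw [hpair, measure_inter_preimage h hZ (determinedBy_preimage n.lt_succ_self a) subset_rfl,
    hab0, zero_mul]

lemma measure_iUnion_occursAt_eq_one [Fintype Γ] [IsProbabilityMeasure Pr]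
    (h : IsMarkovChain Pr Z P) (hZ : ∀ n, Measurable (Z n)) (hP : ∀ a b, 0 < P a b) {m : ℕ}
    (τ : Fin m → Γ) : Pr (⋃ n, occursAt Z n τ) = 1 := by
  obtain ⟨ε, hε0, hε⟩ : ∃ ε : ℝ≥0∞, ε ≠ 0 ∧ ∀ a b, ε ≤ P a b :=
    ⟨Finset.univ.inf fun p : Γ × Γ => P p.1 p.2,
      ((Finset.lt_inf_iff ENNReal.zero_lt_top).2 fun p _ => hP p.1 p.2).ne',
      fun a b => Finset.inf_le (Finset.mem_univ (a, b))⟩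
  -- Blocks start at position `1`, so that `E K` is determined by a nonempty history.
  set O : ℕ → Set S := fun k => occursAt Z (k * m + 1) τ
  set E : ℕ → Set S := fun K => {s | ∀ k < K, s ∉ O k}
  have hE_succ : ∀ K, E (K + 1) = E K \ O K := by
    intro K
    ext s
    simp only [E, mem_ofPred_eq, Set.mem_sdiff, Nat.lt_succ_iff_lt_or_eq, or_imp, forall_and,
      forall_eq]
  have hE_det : ∀ K, DeterminedBy Z (K * m + 1) (E K) := by
    intro K
    induction K with
    | zero => exact fun _ _ _ _ k hk => absurd hk k.not_lt_zero
    | succ K ih =>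
      rw [hE_succ, Set.sdiff_eq]
      exact (ih.mono (by gcongr; omega)).inter
        ((determinedBy_occursAt _ _).compl.mono (by rw [add_one_mul]; omega))
  have hdecay : ∀ K, Pr (E (K + 1)) ≤ (1 - ε ^ m) * Pr (E K) := by
    intro K
    have hO := (determinedBy_occursAt (Z := Z) (K * m + 1) τ).measurableSet hZ
    have hcut := pow_mul_measure_le_measure_inter_occursAt h hZ hε (hE_det K) τ
    rw [ENNReal.sub_mul fun _ _ => measure_ne_top Pr _, one_mul, hE_succ]
    calc Pr (E K \ O K) = Pr (E K) - Pr (E K ∩ O K) :=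
          ENNReal.eq_sub_of_add_eq (measure_ne_top _ _) (measure_sdiff_add_inter _ hO)
      _ ≤ Pr (E K) - ε ^ m * Pr (E K) := tsub_le_tsub_left hcut _
  have hnull := measure_iInter_eq_zero_of_le_mul
    (ENNReal.sub_lt_self ENNReal.one_ne_top one_ne_zero (pow_ne_zero m hε0)) hdecay
  refine (prob_compl_eq_zero_iff (MeasurableSet.iUnion fun n =>
    (determinedBy_occursAt n τ).measurableSet hZ)).1 (measure_mono_null ?_ hnull)
  exact fun s hs => mem_iInter.2 fun K k _ hk => hs (mem_iUnion.2 ⟨_, hk⟩)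

end IsMarkovChain

end RandomSequence

theorem markov_chain_disjunctive_iff_positive_transition_general
    {Γ : Type*} [Fintype Γ] [MeasurableSpace Γ] [MeasurableSingletonClass Γ]
    {S : Type*} [MeasurableSpace S] (Pr : Measure S) [IsProbabilityMeasure Pr]
    (Z : ℕ → S → Γ) (hZ : ∀ n : ℕ, Measurable (Z n))
    (P : Γ → Γ → ENNReal)
    (hmarkov : ∀ (n : ℕ) (w : Fin (n + 1) → Γ) (t : Γ),
      Pr {s : S | (∀ i : Fin (n + 1), Z i.1 s = w i) ∧ Z (n + 1) s = t}
        = P (w (Fin.last n)) t * Pr {s : S | ∀ i : Fin (n + 1), Z i.1 s = w i}) :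
    (∀ (m : ℕ) (τ : Fin m → Γ),
        Pr {s : S | ∃ n : ℕ, ∀ l : Fin m, Z (n + l.1) s = τ l} = 1)
      ↔ ∀ a b : Γ, 0 < P a b := by
  have h : RandomSequence.IsMarkovChain Pr Z P := hmarkov
  simp only [ofPred_exists]
  exact ⟨fun hdisj a b => h.pos_of_measure_iUnion_occursAt_ne_zero hZ
    (ne_of_eq_of_ne (hdisj 2 ![a, b]) one_ne_zero),
    fun hP m τ => h.measure_iUnion_occursAt_eq_one hZ hP τ⟩

/-- a homogeneous Markov chain with values in a finite alphabet and
strictly positive initial distribution is a disjunctive process if and only if its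
transition matrix has all entries positive. The Markov property (conditioning on the
whole history) is expressed via joint distributions. -/
theorem markov_chain_disjunctive_iff_positive_transition
    {Γ : Type*} [Fintype Γ] [Nonempty Γ] [MeasurableSpace Γ] [MeasurableSingletonClass Γ]
    {S : Type*} [MeasurableSpace S] (Pr : Measure S) [IsProbabilityMeasure Pr]
    (Z : ℕ → S → Γ) (hZ : ∀ n : ℕ, Measurable (Z n))
    (P : Γ → Γ → ENNReal) (hstoch : ∀ a : Γ, ∑ b : Γ, P a b = 1)
    (hmarkov : ∀ (n : ℕ) (w : Fin (n + 1) → Γ) (t : Γ),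
      Pr {s : S | (∀ i : Fin (n + 1), Z i.1 s = w i) ∧ Z (n + 1) s = t}
        = P (w (Fin.last n)) t * Pr {s : S | ∀ i : Fin (n + 1), Z i.1 s = w i})
    (hinit : ∀ a : Γ, 0 < Pr {s : S | Z 0 s = a}) :
    (∀ (m : ℕ) (τ : Fin m → Γ),
        Pr {s : S | ∃ n : ℕ, ∀ l : Fin m, Z (n + l.1) s = τ l} = 1)
      ↔ ∀ a b : Γ, 0 < P a b :=
  markov_chain_disjunctive_iff_positive_transition_general Pr Z hZ P hmarkov
end
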